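/- On X = [0,1], let f1(x) = min(2x, 1) and f2(x) = min(2 − 2x, 1). Then the multiple mapping F = {f1, f2} is Hausdorff metric sensitive: there exists δ > 0 such that every nonempty open set U ⊆ [0,1] contains points x, y with d_H(F^n(x), F^n(y)) > δ for some n ≥ 1. -/

import Mathlib

open TopologicalSpace

/-- `mIter f₁ f₂ n x` is the set `F^n(x)` for the multiple mapping `F = {f₁, f₂}`:
all points `f_{i₁} ∘ ⋯ ∘ f_{iₙ} (x)` with `i₁, …, iₙ ∈ {1, 2}`. -/
def mIter {X : Type*} (f₁ f₂ : X → X) : ℕ → X → Set X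
  | 0, x => {x}
  | n + 1, x => f₁ '' mIter f₁ f₂ n x ∪ f₂ '' mIter f₁ f₂ n x

lemma mIter_finite {X : Type*} (f₁ f₂ : X → X) (n : ℕ) (x : X) :
    (mIter f₁ f₂ n x).Finite := by
  induction n with
  | zero => exact Set.finite_singleton x
  | succ n ih => exact (ih.image f₁).union (ih.image f₂)

lemma mIter_nonempty {X : Type*} (f₁ f₂ : X → X) (n : ℕ) (x : X) :
    (mIter f₁ f₂ n x).Nonempty := by
  induction n with
  | zero => exact ⟨x, rfl⟩
  | succ n ih => exact (ih.image f₁).mono Set.subset_union_left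

/-- `F^n(x)` as a nonempty compact subset of `X`. -/
def mIterNC {X : Type*} [TopologicalSpace X] (f₁ f₂ : X → X) (n : ℕ) (x : X) :
    NonemptyCompacts X :=
  ⟨⟨mIter f₁ f₂ n x, (mIter_finite f₁ f₂ n x).isCompact⟩, mIter_nonempty f₁ f₂ n x⟩

/-- The deleted orbit of `x` under `F = {f₁, f₂}`: the family `{F^n(x) : n ≥ 1}`. -/
def deletedOrbit {X : Type*} (f₁ f₂ : X → X) (x : X) : Set (Set X) :=
  {S | ∃ n, 1 ≤ n ∧ S = mIter f₁ f₂ n x}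

/-- `x` is a periodic point of `F = {f₁, f₂}`: its deleted orbit is finite and
`x ∈ F^m(x)` for some `m ≥ 1`. -/
def MPeriodicPt {X : Type*} (f₁ f₂ : X → X) (x : X) : Prop :=
  (deletedOrbit f₁ f₂ x).Finite ∧ ∃ m, 1 ≤ m ∧ x ∈ mIter f₁ f₂ m x

/-- `Ran(F) = {F^n(x) : n ≥ 1, x ∈ X}` as a set of nonempty compact subsets of `X`. -/
def mRan {X : Type*} [TopologicalSpace X] (f₁ f₂ : X → X) : Set (NonemptyCompacts X) :=
  {K | ∃ n, 1 ≤ n ∧ ∃ x, K = mIterNC f₁ f₂ n x}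

/-- Transitivity of the multiple mapping `F = {f₁, f₂}`: for every nonempty open
`U ⊆ X` and every nonempty relatively open subset `𝒰` of `Ran(F)` (in the Hausdorff
metric on nonempty compact subsets), there are `n ≥ 1` and `u ∈ U` with `F^n(u) ∈ 𝒰`. -/
def MTransitive {X : Type*} [MetricSpace X] (f₁ f₂ : X → X) : Prop :=
  ∀ U : Set X, IsOpen U → U.Nonempty →
    ∀ 𝒰 : Set (NonemptyCompacts X), 𝒰.Nonempty →
      (∃ V : Set (NonemptyCompacts X), IsOpen V ∧ 𝒰 = V ∩ mRan f₁ f₂) →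
      ∃ n, 1 ≤ n ∧ ∃ u ∈ U, mIterNC f₁ f₂ n u ∈ 𝒰

/-- Hausdorff metric sensitivity of the multiple mapping `F = {f₁, f₂}`;
`dist` on `NonemptyCompacts X` is the Hausdorff metric `d_H`. -/
def MSensitive {X : Type*} [MetricSpace X] (f₁ f₂ : X → X) : Prop :=
  ∃ δ > (0 : ℝ), ∀ U : Set X, IsOpen U → U.Nonempty →
    ∃ x ∈ U, ∃ y ∈ U, ∃ n, 1 ≤ n ∧ δ < dist (mIterNC f₁ f₂ n x) (mIterNC f₁ f₂ n y)

/-- Topological transitivity of a single map. -/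
def MapTransitive {X : Type*} [TopologicalSpace X] (f : X → X) : Prop :=
  ∀ U V : Set X, IsOpen U → U.Nonempty → IsOpen V → V.Nonempty →
    ∃ n, 1 ≤ n ∧ (f^[n] '' U ∩ V).Nonempty

/-- Sensitivity of a single map. -/
def MapSensitive {X : Type*} [MetricSpace X] (f : X → X) : Prop :=
  ∃ δ > (0 : ℝ), ∀ U : Set X, IsOpen U → U.Nonempty →
    ∃ x ∈ U, ∃ y ∈ U, ∃ n, 1 ≤ n ∧ δ < dist (f^[n] x) (f^[n] y)

/-- The unit interval `[0,1]` with the Euclidean metric. -/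
abbrev UI : Type := Set.Icc (0 : ℝ) 1

/-- The tent map on `[0,1]`: `2x` for `x ≤ 1/2`, `2 - 2x` for `x > 1/2`. -/
noncomputable def tent (x : UI) : UI :=
  ⟨if (x : ℝ) ≤ 1 / 2 then 2 * x else 2 - 2 * x, by
    have h0 := x.2.1; have h1 := x.2.2
    split_ifs with h <;> exact ⟨by nlinarith, by nlinarith⟩⟩

/-- The map `x ↦ 1 - tent x` on `[0,1]`: `1 - 2x` for `x ≤ 1/2`, `2x - 1` for `x > 1/2`. -/
noncomputable def tentc (x : UI) : UI :=
  ⟨if (x : ℝ) ≤ 1 / 2 then 1 - 2 * x else 2 * x - 1, by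
    have h0 := x.2.1; have h1 := x.2.2
    split_ifs with h <;> exact ⟨by nlinarith, by nlinarith⟩⟩

/-- The map `x ↦ min (2x) 1` on `[0,1]`. -/
noncomputable def mmap₁ (x : UI) : UI :=
  ⟨min (2 * x) 1, le_min (by have := x.2.1; linarith) zero_le_one, min_le_right _ _⟩

/-- The map `x ↦ min (2 - 2x) 1` on `[0,1]`. -/
noncomputable def mmap₂ (x : UI) : UI :=
  ⟨min (2 - 2 * x) 1, le_min (by have := x.2.2; linarith) zero_le_one, min_le_right _ _⟩

/-! Each of `f₁, f₂` agrees with the tent map `T` or takes the value `1`, and `T` maps `{0, 1}`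
into itself, so `F^n(x)` consists of `T^n(x)` and possibly the endpoints `0, 1`. The map `T`
doubles a point up to a reflection, so it sends `m / 2^(j+1)` to `m' / 2^j` with `m' ≡ m mod 2`:
hence `T^n` sends dyadic points `k / 2^n` to `{0, 1}` and odd multiples of `1 / 2^(n+1)` to `1/2`.
Every open set contains two such points, and the Hausdorff distance between their images
under `F^n` is at least `1/2`. -/

open Metric Set

section mIter

variable {X : Type*} {f₁ f₂ g : X → X}

lemma iterate_mem_mIter (hg : ∀ q, g q = f₁ q ∨ g q = f₂ q) (n : ℕ) (x : X) :
    g^[n] x ∈ mIter f₁ f₂ n x := by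
  induction n with
  | zero => exact rfl
  | succ n ih =>
    rw [Function.iterate_succ_apply']
    rcases hg (g^[n] x) with h | h
    · exact Or.inl ⟨_, ih, h.symm⟩
    · exact Or.inr ⟨_, ih, h.symm⟩

lemma mIter_subset_insert_iterate {E : Set X} (hE : MapsTo g E E)
    (h₁ : ∀ q, f₁ q = g q ∨ f₁ q ∈ E) (h₂ : ∀ q, f₂ q = g q ∨ f₂ q ∈ E) (n : ℕ) (x : X) :
    mIter f₁ f₂ n x ⊆ insert (g^[n] x) E := by
  induction n with
  | zero => exact fun q hq => Or.inl hq
  | succ n ih =>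
    have step : ∀ f : X → X, (∀ q, f q = g q ∨ f q ∈ E) →
        MapsTo f (insert (g^[n] x) E) (insert (g^[n + 1] x) E) := by
      rintro f hf q (rfl | hq)
      · rw [Function.iterate_succ_apply']
        exact hf _
      · rcases hf q with h | h
        · exact Or.inr (h ▸ hE hq)
        · exact Or.inr h
    rintro _ (⟨q, hq, rfl⟩ | ⟨q, hq, rfl⟩)
    · exact step f₁ h₁ (ih hq)
    · exact step f₂ h₂ (ih hq)

end mIter

lemma TopologicalSpace.NonemptyCompacts.le_dist_of_mem {α : Type*} [MetricSpace α]
    {s t : NonemptyCompacts α} {x : α} {r : ℝ} (hx : x ∈ s)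
    (h : ∀ y ∈ t, r ≤ dist x y) : r ≤ dist s t :=
  ((le_infDist t.nonempty).2 h).trans <| infDist_le_hausdorffDist_of_mem hx <|
    hausdorffEDist_ne_top_of_nonempty_of_bounded s.nonempty t.nonempty
      s.isCompact.isBounded t.isCompact.isBounded

lemma exists_nat_le_mul_two_pow_le {x : ℝ} (hx : x ∈ Icc 0 1) (n : ℕ) :
    ∃ k : ℕ, k < 2 ^ n ∧ k ≤ x * 2 ^ n ∧ x * 2 ^ n ≤ k + 1 := by
  have h2n : (1 : ℝ) ≤ 2 ^ n := one_le_pow₀ one_le_two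
  rcases hx.2.lt_or_eq with hx1 | rfl
  · have hx0 : 0 ≤ x * 2 ^ n := mul_nonneg hx.1 (by positivity)
    refine ⟨⌊x * 2 ^ n⌋₊, ?_, Nat.floor_le hx0, (Nat.lt_floor_add_one _).le⟩
    exact_mod_cast (Nat.floor_lt hx0).2 (by push_cast; nlinarith)
  · refine ⟨2 ^ n - 1, Nat.sub_lt (by positivity) one_pos, ?_⟩
    rw [Nat.cast_sub (Nat.one_le_two_pow), one_mul]
    push_cast
    constructor <;> linarith

lemma coe_tent (x : UI) :
    (tent x : ℝ) = if (x : ℝ) ≤ 1 / 2 then 2 * (x : ℝ) else 2 - 2 * (x : ℝ) := rfl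

lemma tent_eq_mmap₁_or_mmap₂ (x : UI) : tent x = mmap₁ x ∨ tent x = mmap₂ x := by
  have := x.2.2
  by_cases hx : (x : ℝ) ≤ 1 / 2
  · exact Or.inl <| Subtype.ext <| by
      simp only [coe_tent, if_pos hx, mmap₁]; rw [min_eq_left (by linarith)]
  · exact Or.inr <| Subtype.ext <| by
      simp only [coe_tent, if_neg hx, mmap₂]; rw [min_eq_left (by linarith)]

lemma mmap₁_eq_tent_or_mem (x : UI) : mmap₁ x = tent x ∨ mmap₁ x ∈ ({0, 1} : Set UI) := by
  by_cases hx : (x : ℝ) ≤ 1 / 2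
  · exact Or.inl <| Subtype.ext <| by
      simp only [coe_tent, if_pos hx, mmap₁]; rw [min_eq_left (by linarith)]
  · exact Or.inr <| Or.inr <| Subtype.ext <| by
      simp only [mmap₁, Set.Icc.coe_one]; rw [min_eq_right (by linarith)]

lemma mmap₂_eq_tent_or_mem (x : UI) : mmap₂ x = tent x ∨ mmap₂ x ∈ ({0, 1} : Set UI) := by
  have := x.2.2
  by_cases hx : (x : ℝ) ≤ 1 / 2
  · exact Or.inr <| Or.inr <| Subtype.ext <| by
      simp only [mmap₂, Set.Icc.coe_one]; rw [min_eq_right (by linarith)]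
  · exact Or.inl <| Subtype.ext <| by
      simp only [coe_tent, if_neg hx, mmap₂]; rw [min_eq_left (by linarith)]

lemma mapsTo_tent_zero_one : MapsTo tent {0, 1} {0, 1} := by
  rintro x (rfl | rfl) <;> refine Or.inl (Subtype.ext ?_) <;> norm_num [coe_tent]

lemma exists_coe_tent_mul_two_pow (x : UI) (j : ℕ) {m : ℤ} (h : (x : ℝ) * 2 ^ (j + 1) = m) :
    ∃ m' : ℤ, (tent x : ℝ) * 2 ^ j = m' ∧ (Odd m' ↔ Odd m) := by
  by_cases hx : (x : ℝ) ≤ 1 / 2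
  · refine ⟨m, ?_, Iff.rfl⟩
    rw [coe_tent, if_pos hx, ← h]
    ring
  · refine ⟨2 ^ (j + 1) - m, ?_, ?_⟩
    · rw [coe_tent, if_neg hx]
      push_cast
      rw [← h]
      ring
    · simp [Int.odd_sub', Int.even_pow]

lemma exists_coe_tent_iterate_mul_two_pow (n j : ℕ) (x : UI) {m : ℤ}
    (h : (x : ℝ) * 2 ^ (n + j) = m) :
    ∃ m' : ℤ, (tent^[n] x : ℝ) * 2 ^ j = m' ∧ (Odd m' ↔ Odd m) := by
  induction n generalizing x m with
  | zero => exact ⟨m, by simpa using h, Iff.rfl⟩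
  | succ n ih =>
    obtain ⟨m₁, h₁, hm₁⟩ := exists_coe_tent_mul_two_pow x (n + j) (by rw [← h]; ring_nf)
    obtain ⟨m', h', hm'⟩ := ih (tent x) h₁
    exact ⟨m', h', hm'.trans hm₁⟩

lemma tent_iterate_mem_zero_one {n : ℕ} {x : UI} {m : ℤ} (h : (x : ℝ) * 2 ^ n = m) :
    tent^[n] x ∈ ({0, 1} : Set UI) := by
  obtain ⟨m', h', -⟩ := exists_coe_tent_iterate_mul_two_pow n 0 x (by simpa using h)
  rw [pow_zero, mul_one] at h'
  have h0 : (0 : ℤ) ≤ m' := by exact_mod_cast h' ▸ (tent^[n] x).2.1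
  have h1 : m' ≤ 1 := by exact_mod_cast h' ▸ (tent^[n] x).2.2
  rcases (by omega : m' = 0 ∨ m' = 1) with rfl | rfl
  · exact Or.inl (Subtype.ext (by simpa using h'))
  · exact Or.inr (Subtype.ext (by simpa using h'))

lemma coe_tent_iterate_eq_half {n : ℕ} {x : UI} {m : ℤ} (h : (x : ℝ) * 2 ^ (n + 1) = m)
    (hm : Odd m) : (tent^[n] x : ℝ) = 1 / 2 := by
  obtain ⟨m', h', hm'⟩ := exists_coe_tent_iterate_mul_two_pow n 1 x h
  obtain ⟨r, rfl⟩ := hm'.2 hm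
  push_cast at h'
  have h0 : (0 : ℝ) ≤ 2 * r + 1 := by linarith [(tent^[n] x).2.1]
  have h1 : (2 * r + 1 : ℝ) ≤ 2 := by linarith [(tent^[n] x).2.2]
  obtain rfl : r = 0 := by
    have : (0 : ℤ) ≤ 2 * r + 1 := by exact_mod_cast h0
    have : 2 * r + 1 ≤ (2 : ℤ) := by exact_mod_cast h1
    omega
  push_cast at h'
  linarith

lemma half_le_dist_mIterNC {n : ℕ} {x y : UI} (hx : (tent^[n] x : ℝ) = 1 / 2)
    (hy : tent^[n] y ∈ ({0, 1} : Set UI)) :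
    1 / 2 ≤ dist (mIterNC mmap₁ mmap₂ n x) (mIterNC mmap₁ mmap₂ n y) := by
  refine NonemptyCompacts.le_dist_of_mem
    (iterate_mem_mIter tent_eq_mmap₁_or_mmap₂ n x) fun q hq => ?_
  have hq01 : q ∈ ({0, 1} : Set UI) := by
    have := mIter_subset_insert_iterate mapsTo_tent_zero_one mmap₁_eq_tent_or_mem
      mmap₂_eq_tent_or_mem n y hq
    rwa [insert_eq_of_mem hy] at this
  rcases hq01 with rfl | rfl <;> norm_num [Subtype.dist_eq, Real.dist_eq, hx]

lemma exists_dyadic_pair_mem {U : Set UI} (hU : IsOpen U) (hne : U.Nonempty) :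
    ∃ n ≥ 1, ∃ x ∈ U, ∃ y ∈ U,
      (∃ m : ℤ, (x : ℝ) * 2 ^ (n + 1) = m ∧ Odd m) ∧ ∃ m : ℤ, (y : ℝ) * 2 ^ n = m := by
  obtain ⟨x₀, hx₀⟩ := hne
  obtain ⟨ε, hε, hball⟩ := Metric.isOpen_iff.1 hU x₀ hx₀
  obtain ⟨N, hN⟩ := exists_pow_lt_of_lt_one hε (by norm_num : (1 / 2 : ℝ) < 1)
  obtain ⟨k, hk, hk₁, hk₂⟩ := exists_nat_le_mul_two_pow_le x₀.2 (N + 1)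
  have hpos : (0 : ℝ) < 2 ^ (N + 1) := by positivity
  have hscale : (1 / 2 : ℝ) ^ N * 2 ^ (N + 1) = 2 := by
    rw [pow_succ, ← mul_assoc, ← mul_pow]; norm_num
  have hmem : ∀ p : UI, k ≤ (p : ℝ) * 2 ^ (N + 1) → (p : ℝ) * 2 ^ (N + 1) ≤ k + 1 → p ∈ U := by
    intro p hp₁ hp₂
    refine hball (mem_ball.2 ?_)
    rw [Subtype.dist_eq, Real.dist_eq, abs_sub_lt_iff]
    constructor <;> refine lt_of_mul_lt_mul_right ?_ hpos.le <;> nlinarith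
  have hk' : (k : ℝ) + 1 ≤ 2 ^ (N + 1) := by exact_mod_cast hk
  let y : UI := ⟨k / 2 ^ (N + 1), by positivity, by rw [div_le_one hpos]; linarith⟩
  let x : UI := ⟨(2 * k + 1) / 2 ^ (N + 2), by positivity, by
    rw [div_le_one (by positivity), pow_succ]; linarith⟩
  have hy : (y : ℝ) * 2 ^ (N + 1) = k := div_mul_cancel₀ _ hpos.ne'
  have hx : (x : ℝ) * 2 ^ (N + 2) = 2 * k + 1 := div_mul_cancel₀ _ (by positivity)
  have hx' : (x : ℝ) * 2 ^ (N + 1) = k + 1 / 2 := by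
    rw [pow_succ] at hx; linarith
  refine ⟨N + 1, by omega, x, hmem x (by linarith) (by linarith), y, hmem y hy.ge (hy.le.trans
    (by linarith)), ⟨2 * k + 1, by push_cast; exact hx, by simp⟩, k, by exact_mod_cast hy⟩

/-- the multiple mapping `F = {x ↦ min (2x) 1, x ↦ min (2-2x) 1}` on
`[0,1]` is Hausdorff metric sensitive. -/
theorem stmt15 : MSensitive mmap₁ mmap₂ := by
  refine ⟨1 / 4, by norm_num, fun U hU hne => ?_⟩
  obtain ⟨n, hn, x, hxU, y, hyU, ⟨m, hx, hm⟩, ⟨k, hy⟩⟩ := exists_dyadic_pair_mem hU hne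
  refine ⟨x, hxU, y, hyU, n, hn, lt_of_lt_of_le (by norm_num : (1 / 4 : ℝ) < 1 / 2) ?_⟩
  exact half_le_dist_mIterNC (coe_tent_iterate_eq_half hx hm) (tent_iterate_mem_zero_one hy)
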